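/- Let x be a nonconstant p-periodic C¹ solution of ẋ(t) = f(x(t), x(t-τ(t)), σ), where f is L_f-Lipschitz in each of its first two arguments and τ(t) = g(x(t), x(t-τ(t)), σ) with g L_g-Lipschitz in each of its first two arguments. If ‖ẋ‖_∞ < 1/L_g, then |τ(t) - τ(s)| ≤ (2 L_g ‖ẋ‖_∞ /(1 - L_g‖ẋ‖_∞)) |t - s| for all s ≤ t, and the minimal period satisfies p ≥ 2(1 - L_g ‖ẋ‖_∞)/L_f. -/

import Mathlib

/-!
The delay equation `τ t = g (x t) (x (t - τ t)) σ` gives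
`|τ t - τ s| ≤ L_g C (2 |t - s| + |τ t - τ s|)` whenever `x` is `C`-Lipschitz, and this can be
solved for `|τ t - τ s|` because `L_g C < 1`. Feeding the result into the differential equation
shows that `ẋ` is Lipschitz with constant `2 L_f M / (1 - L_g M)`, where `M = sup ‖ẋ‖ > 0`
(`x` is nonconstant). Since `ẋ` is `p`-periodic with zero mean, Vidossich's inequality
`‖y‖_∞ ≤ L p / 4` for `L`-Lipschitz, `p`-periodic, zero-mean `y` gives
`M ≤ 2 L_f M p / (4 (1 - L_g M))`, i.e. `p ≥ 2 (1 - L_g M) / L_f ≥ 2 (1 - L_g K) / L_f`.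
-/

open Function intervalIntegral

section

variable {E : Type*} [NormedAddCommGroup E] [NormedSpace ℝ E]

theorem norm_sub_le_of_norm_deriv_le {x : ℝ → E} {C : ℝ} (hx : Differentiable ℝ x)
    (hC : ∀ t, ‖deriv x t‖ ≤ C) (s t : ℝ) : ‖x t - x s‖ ≤ C * |t - s| :=
  convex_univ.norm_image_sub_le_of_norm_deriv_le (fun t _ => hx t) (fun t _ => hC t)
    (Set.mem_univ s) (Set.mem_univ t)

theorem Function.Periodic.deriv {x : ℝ → E} {p : ℝ} (hx : Periodic x p) :
    Periodic (_root_.deriv x) p := by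
  intro t
  rw [← deriv_comp_add_const, show (fun s => x (s + p)) = x from funext hx]

theorem Function.Periodic.intervalIntegral_deriv_eq_zero [CompleteSpace E] {x : ℝ → E} {p : ℝ}
    (hper : Periodic x p) (hx : ContDiff ℝ 1 x) (a : ℝ) :
    ∫ s in a..a + p, _root_.deriv x s = 0 := by
  rw [integral_deriv_eq_sub (fun t _ => hx.differentiable one_ne_zero t)
    ((hx.continuous_deriv le_rfl).intervalIntegrable _ _), hper a, sub_self]

theorem norm_intervalIntegral_le_of_norm_le_mul_sub_left {φ : ℝ → E} {L a b : ℝ} (hab : a ≤ b)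
    (hφ : ∀ s ∈ Set.Ioc a b, ‖φ s‖ ≤ L * (s - a)) :
    ‖∫ s in a..b, φ s‖ ≤ L * (b - a) ^ 2 / 2 := by
  calc ‖∫ s in a..b, φ s‖ ≤ ∫ s in a..b, L * (s - a) :=
        norm_integral_le_of_norm_le hab (.of_forall hφ)
          (by apply Continuous.intervalIntegrable; fun_prop)
    _ = L * (b - a) ^ 2 / 2 := by
        rw [integral_const_mul, integral_comp_sub_right (fun s => s), integral_id]; ring

theorem norm_intervalIntegral_le_of_norm_le_mul_sub_right {φ : ℝ → E} {L a b : ℝ} (hab : a ≤ b)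
    (hφ : ∀ s ∈ Set.Ioc a b, ‖φ s‖ ≤ L * (b - s)) :
    ‖∫ s in a..b, φ s‖ ≤ L * (b - a) ^ 2 / 2 := by
  calc ‖∫ s in a..b, φ s‖ ≤ ∫ s in a..b, L * (b - s) :=
        norm_integral_le_of_norm_le hab (.of_forall hφ)
          (by apply Continuous.intervalIntegrable; fun_prop)
    _ = L * (b - a) ^ 2 / 2 := by
        rw [integral_const_mul, integral_comp_sub_left (fun s => s), integral_id]; ring

theorem norm_le_of_periodic_of_integral_eq_zero [CompleteSpace E] {y : ℝ → E} {L p : ℝ}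
    (hp : 0 < p) (hy : ∀ s t, ‖y t - y s‖ ≤ L * |t - s|) (hper : Periodic y p)
    (hmean : ∀ a, ∫ s in a..a + p, y s = 0) (t : ℝ) :
    ‖y t‖ ≤ L * p / 4 := by
  have hcont : Continuous y :=
    (LipschitzWith.of_dist_le' fun a b => by simpa [dist_eq_norm] using hy b a).continuous
  have hint : ∀ a b, IntervalIntegrable (fun s => y t - y s) MeasureTheory.volume a b :=
    fun a b => (continuous_const.sub hcont).intervalIntegrable a b
  -- zero mean turns `p • y t` into `∫ (y t - y s)` over a period; on each half of it
  -- `y t - y s` is controlled by the distance to the nearer endpoint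
  have hrep : p • y t = (∫ s in t..t + p / 2, (y t - y s)) +
      ∫ s in t + p / 2..t + p, (y t - y s) := by
    rw [integral_add_adjacent_intervals (hint _ _) (hint _ _),
      integral_sub intervalIntegrable_const (hcont.intervalIntegrable _ _), hmean, sub_zero,
      integral_const, add_sub_cancel_left]
  have hfirst : ‖∫ s in t..t + p / 2, (y t - y s)‖ ≤ L * (p / 2) ^ 2 / 2 := by
    have := norm_intervalIntegral_le_of_norm_le_mul_sub_left (φ := fun s => y t - y s)
      (L := L) (by linarith : t ≤ t + p / 2) fun s hs => by
        rw [norm_sub_rev, ← abs_of_pos (sub_pos.2 hs.1)]; exact hy t s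
    rwa [add_sub_cancel_left] at this
  have hsecond : ‖∫ s in t + p / 2..t + p, (y t - y s)‖ ≤ L * (p / 2) ^ 2 / 2 := by
    have := norm_intervalIntegral_le_of_norm_le_mul_sub_right (φ := fun s => y t - y s)
      (L := L) (by linarith : t + p / 2 ≤ t + p) fun s hs => by
        rw [← hper t, ← abs_of_nonneg (sub_nonneg.2 hs.2)]; exact hy s (t + p)
    rwa [show t + p - (t + p / 2) = p / 2 by ring] at this
  have hnorm : p * ‖y t‖ ≤ p * (L * p / 4) := by
    calc p * ‖y t‖ = ‖p • y t‖ := by rw [norm_smul, Real.norm_of_nonneg hp.le]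
      _ ≤ L * (p / 2) ^ 2 / 2 + L * (p / 2) ^ 2 / 2 :=
          hrep ▸ (norm_add_le _ _).trans (add_le_add hfirst hsecond)
      _ = p * (L * p / 4) := by ring
  exact le_of_mul_le_mul_left hnorm hp

end

section

variable {E F : Type*} [NormedAddCommGroup E] [NormedAddCommGroup F]
  {x : ℝ → E} {τ : ℝ → ℝ} {C : ℝ}

theorem norm_sub_add_norm_sub_delayed_le (hC : 0 ≤ C)
    (hx : ∀ s t, ‖x t - x s‖ ≤ C * |t - s|) (s t : ℝ) :
    ‖x t - x s‖ + ‖x (t - τ t) - x (s - τ s)‖ ≤ C * (2 * |t - s| + |τ t - τ s|) := by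
  have hdelayed : |t - τ t - (s - τ s)| ≤ |t - s| + |τ t - τ s| := by
    rw [show t - τ t - (s - τ s) = (t - s) - (τ t - τ s) by ring]
    exact abs_sub _ _
  have := hx (s - τ s) (t - τ t)
  have := hx s t
  nlinarith

theorem abs_sub_le_of_state_dependent_delay {G : E → E → ℝ} {Lg : ℝ} (hLg : 0 ≤ Lg)
    (hC : 0 ≤ C) (hLgC : Lg * C < 1)
    (hG : ∀ θ₁ θ₂ θ₁' θ₂', |G θ₁ θ₂ - G θ₁' θ₂'| ≤ Lg * (‖θ₁ - θ₁'‖ + ‖θ₂ - θ₂'‖))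
    (hτ : ∀ t, τ t = G (x t) (x (t - τ t))) (hx : ∀ s t, ‖x t - x s‖ ≤ C * |t - s|)
    (s t : ℝ) : |τ t - τ s| ≤ 2 * Lg * C / (1 - Lg * C) * |t - s| := by
  have h : |τ t - τ s| ≤ Lg * (C * (2 * |t - s| + |τ t - τ s|)) := by
    calc |τ t - τ s| ≤ Lg * (‖x t - x s‖ + ‖x (t - τ t) - x (s - τ s)‖) := by
          have := hG (x t) (x (t - τ t)) (x s) (x (s - τ s))
          rwa [← hτ t, ← hτ s] at this
      _ ≤ Lg * (C * (2 * |t - s| + |τ t - τ s|)) :=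
          mul_le_mul_of_nonneg_left (norm_sub_add_norm_sub_delayed_le hC hx s t) hLg
  rw [div_mul_eq_mul_div, le_div_iff₀ (sub_pos.2 hLgC)]
  nlinarith

theorem norm_sub_le_of_state_dependent_delay {G : E → E → ℝ} {H : E → E → F} {y : ℝ → F}
    {Lg Lh : ℝ} (hLg : 0 ≤ Lg) (hLh : 0 ≤ Lh) (hC : 0 ≤ C) (hLgC : Lg * C < 1)
    (hG : ∀ θ₁ θ₂ θ₁' θ₂', |G θ₁ θ₂ - G θ₁' θ₂'| ≤ Lg * (‖θ₁ - θ₁'‖ + ‖θ₂ - θ₂'‖))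
    (hH : ∀ θ₁ θ₂ θ₁' θ₂', ‖H θ₁ θ₂ - H θ₁' θ₂'‖ ≤ Lh * (‖θ₁ - θ₁'‖ + ‖θ₂ - θ₂'‖))
    (hτ : ∀ t, τ t = G (x t) (x (t - τ t))) (hy : ∀ t, y t = H (x t) (x (t - τ t)))
    (hx : ∀ s t, ‖x t - x s‖ ≤ C * |t - s|) (s t : ℝ) :
    ‖y t - y s‖ ≤ 2 * Lh * C / (1 - Lg * C) * |t - s| := by
  have hpos : 0 < 1 - Lg * C := sub_pos.2 hLgC
  have hτts := abs_sub_le_of_state_dependent_delay hLg hC hLgC hG hτ hx s t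
  calc ‖y t - y s‖ ≤ Lh * (‖x t - x s‖ + ‖x (t - τ t) - x (s - τ s)‖) := by
        rw [hy t, hy s]; exact hH _ _ _ _
    _ ≤ Lh * (C * (2 * |t - s| + 2 * Lg * C / (1 - Lg * C) * |t - s|)) := by
        gcongr
        exact (norm_sub_add_norm_sub_delayed_le hC hx s t).trans (by gcongr)
    _ = 2 * Lh * C / (1 - Lg * C) * |t - s| := by
        linear_combination (-2 * Lh * C * |t - s|) * mul_inv_cancel₀ hpos.ne'

end

theorem stmt_6_general (N : ℕ)
    (f : EuclideanSpace ℝ (Fin N) → EuclideanSpace ℝ (Fin N) → ℝ → EuclideanSpace ℝ (Fin N))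
    (g : EuclideanSpace ℝ (Fin N) → EuclideanSpace ℝ (Fin N) → ℝ → ℝ)
    (Lf Lg : ℝ) (hLf : 0 < Lf) (hLg : 0 < Lg)
    (hf_lip : ∀ (θ₁ θ₂ θ₁' θ₂' : EuclideanSpace ℝ (Fin N)) (σ' : ℝ),
      ‖f θ₁ θ₂ σ' - f θ₁' θ₂' σ'‖ ≤ Lf * (‖θ₁ - θ₁'‖ + ‖θ₂ - θ₂'‖))
    (hg_lip : ∀ (θ₁ θ₂ θ₁' θ₂' : EuclideanSpace ℝ (Fin N)) (σ' : ℝ),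
      |g θ₁ θ₂ σ' - g θ₁' θ₂' σ'| ≤ Lg * (‖θ₁ - θ₁'‖ + ‖θ₂ - θ₂'‖))
    (σ : ℝ) (x : ℝ → EuclideanSpace ℝ (Fin N)) (hx : ContDiff ℝ 1 x)
    (τ : ℝ → ℝ)
    (hsol : ∀ t : ℝ, deriv x t = f (x t) (x (t - τ t)) σ)
    (hτ : ∀ t : ℝ, τ t = g (x t) (x (t - τ t)) σ)
    (K : ℝ) (hK : ∀ t : ℝ, ‖deriv x t‖ ≤ K) (hK1 : K < 1 / Lg)
    (p : ℝ) (hp : 0 < p) (hper : Function.Periodic x p)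
    (hnonconst : ∃ t s : ℝ, x t ≠ x s) :
    (∀ s t : ℝ, s ≤ t → |τ t - τ s| ≤ 2 * Lg * K / (1 - Lg * K) * (t - s)) ∧
    p ≥ 2 * (1 - Lg * K) / Lf := by
  have hdiff : Differentiable ℝ x := hx.differentiable one_ne_zero
  have hLgK : Lg * K < 1 := by rwa [lt_div_iff₀ hLg, mul_comm] at hK1
  refine ⟨fun s t hst => ?_, ?_⟩
  · simpa only [abs_of_nonneg (sub_nonneg.2 hst)] using
      abs_sub_le_of_state_dependent_delay hLg.le ((norm_nonneg _).trans (hK 0)) hLgK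
        (fun _ _ _ _ => hg_lip _ _ _ _ σ) hτ (norm_sub_le_of_norm_deriv_le hdiff hK) s t
  · set M := ⨆ t, ‖deriv x t‖
    have hM : ∀ t, ‖deriv x t‖ ≤ M := le_ciSup ⟨K, by rintro _ ⟨t, rfl⟩; exact hK t⟩
    have hLgM : Lg * M < 1 := (mul_le_mul_of_nonneg_left (ciSup_le hK) hLg.le).trans_lt hLgK
    have hMpos : 0 < M := by
      obtain ⟨t, ht⟩ : ∃ t, deriv x t ≠ 0 := by
        by_contra! h
        obtain ⟨a, b, hab⟩ := hnonconst
        exact hab (is_const_of_deriv_eq_zero hdiff h a b)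
      exact (norm_pos_iff.2 ht).trans_le (hM t)
    have hMp : M ≤ 2 * Lf * M / (1 - Lg * M) * p / 4 :=
      ciSup_le <| norm_le_of_periodic_of_integral_eq_zero hp
        (norm_sub_le_of_state_dependent_delay hLg.le hLf.le hMpos.le hLgM
          (fun _ _ _ _ => hg_lip _ _ _ _ σ) (fun _ _ _ _ => hf_lip _ _ _ _ σ) hτ hsol
          (norm_sub_le_of_norm_deriv_le hdiff hM))
        hper.deriv (hper.intervalIntegral_deriv_eq_zero hx)
    have hpM : 2 * (1 - Lg * M) ≤ Lf * p := by
      rw [div_mul_eq_mul_div, div_div, le_div_iff₀ (by nlinarith)] at hMp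
      nlinarith
    rw [ge_iff_le, div_le_iff₀ hLf]
    nlinarith [ciSup_le hK]

/-- Lipschitz estimate for the state-dependent delay τ and lower
bound on the minimal period when ‖ẋ‖_∞ < 1/L_g. -/
theorem stmt_6 (N : ℕ)
    (f : EuclideanSpace ℝ (Fin N) → EuclideanSpace ℝ (Fin N) → ℝ → EuclideanSpace ℝ (Fin N))
    (g : EuclideanSpace ℝ (Fin N) → EuclideanSpace ℝ (Fin N) → ℝ → ℝ)
    (Lf Lg : ℝ) (hLf : 0 < Lf) (hLg : 0 < Lg)
    (hf_lip : ∀ (θ₁ θ₂ θ₁' θ₂' : EuclideanSpace ℝ (Fin N)) (σ' : ℝ),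
      ‖f θ₁ θ₂ σ' - f θ₁' θ₂' σ'‖ ≤ Lf * (‖θ₁ - θ₁'‖ + ‖θ₂ - θ₂'‖))
    (hg_lip : ∀ (θ₁ θ₂ θ₁' θ₂' : EuclideanSpace ℝ (Fin N)) (σ' : ℝ),
      |g θ₁ θ₂ σ' - g θ₁' θ₂' σ'| ≤ Lg * (‖θ₁ - θ₁'‖ + ‖θ₂ - θ₂'‖))
    (σ : ℝ) (x : ℝ → EuclideanSpace ℝ (Fin N)) (hx : ContDiff ℝ 1 x)
    (τ : ℝ → ℝ)
    (hsol : ∀ t : ℝ, deriv x t = f (x t) (x (t - τ t)) σ)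
    (hτ : ∀ t : ℝ, τ t = g (x t) (x (t - τ t)) σ)
    (K : ℝ) (hK : ∀ t : ℝ, ‖deriv x t‖ ≤ K) (hK1 : K < 1 / Lg)
    (p : ℝ) (hp : 0 < p) (hper : Function.Periodic x p)
    (hnonconst : ∃ t s : ℝ, x t ≠ x s)
    (hmin : ∀ q : ℝ, 0 < q → Function.Periodic x q → p ≤ q) :
    (∀ s t : ℝ, s ≤ t → |τ t - τ s| ≤ 2 * Lg * K / (1 - Lg * K) * (t - s)) ∧
    p ≥ 2 * (1 - Lg * K) / Lf :=
  stmt_6_general N f g Lf Lg hLf hLg hf_lip hg_lip σ x hx τ hsol hτ K hK hK1 p hp hper hnonconst
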